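/- Let c > 0 and M > 0. There exists a constant C > 0 depending only on c and M such that for every n ≥ 2 and every family of points x₁, …, xₙ ∈ ℝ³ with |xᵢ| ≤ M for all i and |xᵢ − xⱼ| ≥ c n^{−1/3} for all i ≠ j, one has for every index i: Σ_{j ≠ i} 1/|xᵢ − xⱼ|³ ≤ C n log n. -/
import Mathlib

open MeasureTheory Metric Finset
open scoped ENNReal

lemma count_sep {ι : Type*} (s : Finset ι) (y : ι → EuclideanSpace ℝ (Fin 3))
    (z : EuclideanSpace ℝ (Fin 3)) {δ r : ℝ} (hδ : 0 < δ) (hr : 0 ≤ r)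
    (hsep : ∀ i ∈ s, ∀ j ∈ s, i ≠ j → δ ≤ ‖y i - y j‖)
    (hin : ∀ i ∈ s, ‖y i - z‖ ≤ r) :
    (s.card : ℝ) * (δ / 2) ^ 3 ≤ (r + δ / 2) ^ 3 := by
  have hfr : Module.finrank ℝ (EuclideanSpace ℝ (Fin 3)) = 3 := by
    simp [finrank_euclideanSpace]
  have hdisj : (s : Set ι).PairwiseDisjoint (fun i => ball (y i) (δ / 2)) := by
    intro i hi j hj hij
    apply Set.disjoint_left.2
    intro w hwi hwj
    have : dist (y i) (y j) < δ := by
      calc dist (y i) (y j) ≤ dist (y i) w + dist w (y j) := dist_triangle _ _ _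
        _ < δ / 2 + δ / 2 := by
          rw [dist_comm (y i) w]
          exact add_lt_add hwi hwj
        _ = δ := by ring
    have := hsep i hi j hj hij
    rw [← dist_eq_norm] at this
    linarith
  have hsub : ∀ i ∈ s, ball (y i) (δ / 2) ⊆ ball z (r + δ / 2) := by
    intro i hi w hw
    have h1 : dist (y i) z ≤ r := by rw [dist_eq_norm]; exact hin i hi
    calc dist w z ≤ dist w (y i) + dist (y i) z := dist_triangle _ _ _
      _ < δ / 2 + r := add_lt_add_of_lt_of_le hw h1
      _ = r + δ / 2 := by ring
  have hmeas : ∑ i ∈ s, volume (ball (y i) (δ / 2)) ≤ volume (ball z (r + δ / 2)) := by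
    rw [← measure_biUnion_finset hdisj (fun i _ => measurableSet_ball)]
    exact measure_mono (Set.iUnion₂_subset hsub)
  have hb : ∀ w : EuclideanSpace ℝ (Fin 3), ∀ t : ℝ, 0 ≤ t →
      volume (ball w t) = ENNReal.ofReal (t ^ 3) * volume (ball (0 : EuclideanSpace ℝ (Fin 3)) 1) := by
    intro w t ht
    rw [Measure.addHaar_ball volume w ht, hfr]
  rw [Finset.sum_congr rfl (fun i _ => hb (y i) (δ / 2) (by linarith)),
    hb z (r + δ / 2) (by linarith), Finset.sum_const, nsmul_eq_mul] at hmeas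
  have hvpos : 0 < volume (ball (0 : EuclideanSpace ℝ (Fin 3)) 1) :=
    measure_ball_pos _ _ one_pos
  have hvlt : volume (ball (0 : EuclideanSpace ℝ (Fin 3)) 1) < ⊤ := measure_ball_lt_top
  rw [← mul_assoc] at hmeas
  have key : (s.card : ℝ≥0∞) * ENNReal.ofReal ((δ / 2) ^ 3) ≤ ENNReal.ofReal ((r + δ / 2) ^ 3) :=
    (ENNReal.mul_le_mul_iff_left hvpos.ne' hvlt.ne).1 hmeas
  have h38 : (0:ℝ) ≤ (δ / 2) ^ 3 := by positivity
  rw [show ((s.card : ℝ≥0∞)) = ENNReal.ofReal (s.card : ℝ) by simp,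
    ← ENNReal.ofReal_mul (by positivity)] at key
  exact (ENNReal.ofReal_le_ofReal_iff (by positivity)).1 key

/-- Let `c > 0`, `M > 0`. There is `C > 0` (depending only on `c` and `M`) such that for
every `n ≥ 2` and points `x₁, …, xₙ ∈ ℝ³` with `|xᵢ| ≤ M` and `|xᵢ − xⱼ| ≥ c n^{-1/3}`
for `i ≠ j`, one has `Σ_{j ≠ i} |xᵢ − xⱼ|⁻³ ≤ C n log n` for every `i`. -/
theorem sum_inv_cubed_dist_le (c M : ℝ) (hc : 0 < c) (hM : 0 < M) :
    ∃ C : ℝ, 0 < C ∧ ∀ n : ℕ, 2 ≤ n → ∀ x : Fin n → EuclideanSpace ℝ (Fin 3),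
      (∀ i, ‖x i‖ ≤ M) →
      (∀ i j, i ≠ j → c * (n : ℝ) ^ (-(1 / 3) : ℝ) ≤ ‖x i - x j‖) →
      ∀ i, ∑ j ∈ Finset.univ.erase i, 1 / ‖x i - x j‖ ^ 3 ≤ C * n * Real.log n := by
  have hlog2 : 0 < Real.log 2 := Real.log_pos one_lt_two
  set L : ℝ := Real.log (2 * M / c) with hL
  set A : ℝ := (|L| / Real.log 2 + 1) / Real.log 2 + 1 / (3 * Real.log 2) with hA
  have hApos : 0 < A := by
    have h1 : 0 ≤ |L| := abs_nonneg _
    have : 0 < (|L| / Real.log 2 + 1) / Real.log 2 := by positivity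
    have : 0 < 1 / (3 * Real.log 2) := by positivity
    unfold A; positivity
  refine ⟨512 / c ^ 3 * A, by positivity, ?_⟩
  intro n hn x hx hsep i
  haveI : Nontrivial (Fin n) := Fin.nontrivial_iff_two_le.mpr hn
  set δ : ℝ := c * (n : ℝ) ^ (-(1 / 3) : ℝ) with hδdef
  have hnpos : (0 : ℝ) < n := by positivity
  have hn1 : (1 : ℝ) ≤ n := by exact_mod_cast (by omega : 1 ≤ n)
  have hδpos : 0 < δ := by positivity
  have hδ3 : δ ^ 3 = c ^ 3 / n := by
    rw [hδdef, mul_pow]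
    congr 1
    rw [← Real.rpow_natCast ((n : ℝ) ^ (-(1/3) : ℝ)) 3, ← Real.rpow_mul hnpos.le,
      show (-(1/3) : ℝ) * ((3:ℕ):ℝ) = -1 by norm_num, Real.rpow_neg_one]
  have hd2M : ∀ j : Fin n, ‖x i - x j‖ ≤ 2 * M := fun j =>
    (norm_sub_le _ _).trans (by linarith [hx i, hx j])
  have hdlb : ∀ j ∈ Finset.univ.erase i, δ ≤ ‖x i - x j‖ := by
    intro j hj
    exact hsep i j (Finset.ne_of_mem_erase hj).symm
  have hδ2M : δ ≤ 2 * M := by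
    obtain ⟨j, hj⟩ := exists_ne i
    exact (hdlb j (Finset.mem_erase.mpr ⟨hj, Finset.mem_univ j⟩)).trans (hd2M j)
  set K : ℕ := Nat.log 2 ⌊2 * M / δ⌋₊ with hK
  have hfl1 : 1 ≤ ⌊2 * M / δ⌋₊ := by
    apply Nat.le_floor
    rw [le_div_iff₀ hδpos]; push_cast; linarith
  set g : Fin n → ℕ := fun j => Nat.log 2 ⌊‖x i - x j‖ / δ⌋₊ with hg
  have hmaps : ∀ j ∈ Finset.univ.erase i, g j ∈ Finset.range (K + 1) := by
    intro j hj
    rw [Finset.mem_range, Nat.lt_succ_iff]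
    exact Nat.log_mono_right (Nat.floor_le_floor (by gcongr; exact hd2M j))
  rw [← Finset.sum_fiberwise_of_maps_to hmaps]
  have hinner : ∀ k ∈ Finset.range (K + 1),
      ∑ j ∈ (Finset.univ.erase i).filter (fun j => g j = k), 1 / ‖x i - x j‖ ^ 3
        ≤ 512 * n / c ^ 3 := by
    intro k _
    set F := (Finset.univ.erase i).filter (fun j => g j = k) with hF
    have hmem : ∀ j ∈ F, j ∈ Finset.univ.erase i ∧ g j = k := by
      intro j hj; exact ⟨(Finset.mem_filter.mp hj).1, (Finset.mem_filter.mp hj).2⟩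
    have hfl : ∀ j ∈ F, 1 ≤ ⌊‖x i - x j‖ / δ⌋₊ := by
      intro j hj
      apply Nat.le_floor
      rw [le_div_iff₀ hδpos]; push_cast
      linarith [hdlb j (hmem j hj).1]
    have hlow : ∀ j ∈ F, δ * 2 ^ k ≤ ‖x i - x j‖ := by
      intro j hj
      have h1 : (2 : ℕ) ^ k ≤ ⌊‖x i - x j‖ / δ⌋₊ := by
        rw [← (hmem j hj).2]
        exact Nat.pow_log_le_self 2 (by have := hfl j hj; omega)
      have h2 : (2:ℝ)^k ≤ ‖x i - x j‖ / δ := by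
        calc (2:ℝ)^k = ((2^k : ℕ) : ℝ) := by push_cast; ring
          _ ≤ (⌊‖x i - x j‖ / δ⌋₊ : ℝ) := by exact_mod_cast h1
          _ ≤ _ := Nat.floor_le (by positivity)
      rw [le_div_iff₀ hδpos] at h2
      linarith
    have hup : ∀ j ∈ F, ‖x j - x i‖ ≤ 2 ^ (k + 1) * δ := by
      intro j hj
      have h1 : ⌊‖x i - x j‖ / δ⌋₊ < 2 ^ (k + 1) := by
        rw [← (hmem j hj).2]
        exact Nat.lt_pow_succ_log_self one_lt_two _
      have h2 : ‖x i - x j‖ / δ < 2 ^ (k + 1) := by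
        calc ‖x i - x j‖ / δ < ⌊‖x i - x j‖ / δ⌋₊ + 1 := Nat.lt_floor_add_one _
          _ ≤ 2 ^ (k + 1) := by exact_mod_cast Nat.succ_le_of_lt h1
      rw [norm_sub_rev]
      rw [div_lt_iff₀ hδpos] at h2
      linarith
    have hcard : (F.card : ℝ) * (δ / 2) ^ 3 ≤ (2 ^ (k + 1) * δ + δ / 2) ^ 3 :=
      count_sep F x (x i) hδpos (by positivity)
        (fun a ha b hb hab => hsep a b hab) hup
    have hp1 : (1 : ℝ) ≤ 2 ^ k := one_le_pow₀ one_le_two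
    have h8 : (8 : ℝ) ^ k = (2 ^ k) ^ 3 := by
      rw [← pow_mul, show (8:ℝ) = 2 ^ 3 by norm_num, ← pow_mul, mul_comm]
    have hcard' : (F.card : ℝ) ≤ 512 * 8 ^ k := by
      have he : (2 ^ (k + 1) * δ + δ / 2) = (δ / 2) * (2 ^ (k + 2) + 1) := by ring
      rw [he, mul_pow] at hcard
      have hpos : (0:ℝ) < (δ / 2) ^ 3 := by positivity
      rw [mul_comm ((δ / 2) ^ 3)] at hcard
      have h3 : (F.card : ℝ) ≤ ((2:ℝ) ^ (k + 2) + 1) ^ 3 :=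
        le_of_mul_le_mul_right hcard hpos
      have h4 : ((2:ℝ) ^ (k + 2) + 1) ≤ 2 ^ (k + 3) := by
        have hh : (1:ℝ) ≤ 2 ^ (k + 2) := one_le_pow₀ one_le_two
        have he2 : (2:ℝ) ^ (k + 3) = 2 ^ (k + 2) * 2 := by rw [pow_succ]
        rw [he2]; linarith
      calc (F.card : ℝ) ≤ ((2:ℝ) ^ (k + 2) + 1) ^ 3 := h3
        _ ≤ ((2:ℝ) ^ (k + 3)) ^ 3 := pow_le_pow_left₀ (by positivity) h4 3
        _ = 512 * 8 ^ k := by rw [h8, show k + 3 = k + 3 from rfl, pow_add]; ring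
    calc ∑ j ∈ F, 1 / ‖x i - x j‖ ^ 3 ≤ ∑ j ∈ F, 1 / (δ * 2 ^ k) ^ 3 := by
          apply Finset.sum_le_sum
          intro j hj
          apply one_div_le_one_div_of_le (by positivity)
          exact pow_le_pow_left₀ (by positivity) (hlow j hj) 3
      _ = F.card * (1 / (δ * 2 ^ k) ^ 3) := by rw [Finset.sum_const, nsmul_eq_mul]
      _ ≤ 512 * 8 ^ k * (1 / (δ * 2 ^ k) ^ 3) := by
          apply mul_le_mul_of_nonneg_right hcard' (by positivity)
      _ = 512 / δ ^ 3 := by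
          rw [h8, mul_pow]
          have h2k : ((2:ℝ) ^ k) ^ 3 ≠ 0 := by positivity
          field_simp
      _ = 512 * n / c ^ 3 := by rw [hδ3]; field_simp
  calc ∑ k ∈ Finset.range (K + 1), ∑ j ∈ (Finset.univ.erase i).filter (fun j => g j = k),
        1 / ‖x i - x j‖ ^ 3
      ≤ ∑ k ∈ Finset.range (K + 1), (512 * n / c ^ 3) := Finset.sum_le_sum hinner
    _ = (K + 1 : ℝ) * (512 * n / c ^ 3) := by
        rw [Finset.sum_const, Finset.card_range, nsmul_eq_mul]; push_cast; ring
    _ ≤ (A * Real.log n) * (512 * n / c ^ 3) := by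
        apply mul_le_mul_of_nonneg_right _ (by positivity)
        -- (K+1) ≤ A log n
        have h2K : (2 : ℝ) ^ K ≤ 2 * M / δ := by
          calc (2 : ℝ) ^ K = ((2 ^ K : ℕ) : ℝ) := by push_cast; ring
            _ ≤ (⌊2 * M / δ⌋₊ : ℝ) := by
                exact_mod_cast Nat.pow_log_le_self 2 (by omega)
            _ ≤ 2 * M / δ := Nat.floor_le (by positivity)
        have hKlog : (K : ℝ) * Real.log 2 ≤ L + (1 / 3) * Real.log n := by
          have h1 : Real.log ((2:ℝ) ^ K) ≤ Real.log (2 * M / δ) :=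
            Real.log_le_log (by positivity) h2K
          rw [Real.log_pow] at h1
          have h2 : 2 * M / δ = (2 * M / c) * (n : ℝ) ^ ((1:ℝ)/3) := by
            rw [hδdef, Real.rpow_neg hnpos.le]
            have hne : (n : ℝ) ^ ((1:ℝ)/3) ≠ 0 := by positivity
            field_simp
          rw [h2, Real.log_mul (by positivity) (by positivity),
            Real.log_rpow hnpos] at h1
          push_cast at h1 ⊢
          linarith
        have hlogn : Real.log 2 ≤ Real.log n := Real.log_le_log (by norm_num) (by exact_mod_cast hn)
        have hLabs : L ≤ |L| := le_abs_self L
        rw [hA]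
        have h3 : (K : ℝ) + 1 ≤ (|L| / Real.log 2 + 1) + 1 / (3 * Real.log 2) * Real.log n := by
          have h1 : (K : ℝ) * Real.log 2 ≤ |L| + (1 / 3) * Real.log n := by
            linarith
          rw [← le_div_iff₀ hlog2] at h1
          have heq : (|L| + (1/3) * Real.log n) / Real.log 2
              = |L| / Real.log 2 + 1 / (3 * Real.log 2) * Real.log n := by
            field_simp
          rw [heq] at h1
          linarith
        have h2 : (|L| / Real.log 2 + 1) ≤ (|L| / Real.log 2 + 1) / Real.log 2 * Real.log n := by
          rw [div_mul_eq_mul_div, le_div_iff₀ hlog2]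
          have h0 : 0 ≤ |L| / Real.log 2 + 1 := by positivity
          nlinarith [hlogn]
        have hgoal : ((|L| / Real.log 2 + 1) / Real.log 2 + 1 / (3 * Real.log 2)) * Real.log n
            = (|L| / Real.log 2 + 1) / Real.log 2 * Real.log n
              + 1 / (3 * Real.log 2) * Real.log n := by ring
        rw [hgoal]
        linarith
    _ = 512 / c ^ 3 * A * n * Real.log n := by ring
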